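/- arXiv:0904.2129 — 2 statements merged into one kernel-verified Lean document; each statement's English description precedes it below -/
import Mathlib

section
/- Let G be an outerplanar st-digraph with vertex set V^l ∪ V^r ∪ {s,t}, where V^l and V^r are the vertices on the left and right sides of the outer boundary. Any acyclic HP-completion set of G induces a hamiltonian path that visits the vertices of V^l in the order in which they appear along the left side of G, and likewise visits the vertices of V^r in the order they appear along the right side. -/
/-- A directed hamiltonian path of the relation `E`, visiting every vertex exactly once. -/
def IsHamPathOf {V : Type} (E : V → V → Prop) (l : List V) : Prop :=
  l.Nodup ∧ (∀ v : V, v ∈ l) ∧ l.Chain' E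

/-- A directed hamiltonian path of the vertices of `W`. -/
def IsHamPathOn {V : Type} (E : V → V → Prop) (W : Set V) (l : List V) : Prop :=
  l.Nodup ∧ (∀ v : V, v ∈ l ↔ v ∈ W) ∧ l.Chain' E

/-- The relation `E` is acyclic (no directed cycles). -/
def AcyclicRel {V : Type} (E : V → V → Prop) : Prop :=
  ∀ v : V, ¬ Relation.TransGen E v v

/-- `x` lies strictly inside the cyclic arc from `a` to `b` (going forwards) on a cycle
of length `n`. -/
def inCycArc (n a b x : ℕ) : Prop :=
  (x + n - a) % n < (b + n - a) % n ∧ (x + n - a) % n ≠ 0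

/-- Two chords of the cycle (given by the cyclically ordered list `c` of the vertices of the
outer face) cross each other: their endpoints are distinct and they interleave on the cycle. -/
def chordsCrossIn {V : Type} [DecidableEq V] (c : List V) (e f : V × V) : Prop :=
  e.1 ≠ f.1 ∧ e.1 ≠ f.2 ∧ e.2 ≠ f.1 ∧ e.2 ≠ f.2 ∧
  Xor' (inCycArc c.length (c.idxOf e.1) (c.idxOf e.2) (c.idxOf f.1))
       (inCycArc c.length (c.idxOf e.1) (c.idxOf e.2) (c.idxOf f.2))

/-- An outerplanar st-digraph: an acyclic digraph with unique source `s` and unique sink `t`,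
embedded with all vertices on the outer face; `leftV` (resp. `rightV`) is the list of interior
vertices of the left (resp. right) side of the outer boundary, ordered from `s` to `t`,
each side being a directed path from `s` to `t`.  All edges are chords of the outer cycle
and, by planarity of the embedding, no two edges cross. -/
structure OuterStDigraph (V : Type) [Fintype V] [DecidableEq V] where
  E : V → V → Prop
  s : V
  t : V
  leftV : List V
  rightV : List V
  cover : ∀ v : V, v ∈ (s :: leftV) ++ (t :: rightV)
  nodup : ((s :: leftV) ++ (t :: rightV)).Nodup
  left_path : ((s :: leftV) ++ [t]).Chain' E
  right_path : ((s :: rightV) ++ [t]).Chain' E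
  acyclic : AcyclicRel E
  source_unique : ∀ v, (∀ u, ¬ E u v) → v = s
  sink_unique : ∀ v, (∀ u, ¬ E v u) → v = t
  no_loops : ∀ u v, E u v → u ≠ v
  planarity : ∀ a b c d, E a b → E c d →
    ¬ chordsCrossIn ((s :: leftV) ++ (t :: rightV.reverse)) (a, b) (c, d)

namespace OuterStDigraph

variable {V : Type} [Fintype V] [DecidableEq V]

/-- The outer cycle of the embedding, listed in cyclic order. -/
def cyc (G : OuterStDigraph V) : List V := (G.s :: G.leftV) ++ (G.t :: G.rightV.reverse)

/-- Two (possibly added) edges, drawn as chords of the outer cycle, cross each other. -/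
def Cross (G : OuterStDigraph V) (e f : V × V) : Prop := chordsCrossIn G.cyc e f

/-- The edge relation of `G` augmented by the edges in `P`. -/
def AugE (G : OuterStDigraph V) (P : Finset (V × V)) : V → V → Prop :=
  fun u v => G.E u v ∨ (u, v) ∈ P

/-- `P` is an acyclic HP-completion set for `G`: its edges are new, the augmented digraph
is acyclic and has a hamiltonian path. -/
def IsCompletion (G : OuterStDigraph V) (P : Finset (V × V)) : Prop :=
  (∀ e ∈ P, ¬ G.E e.1 e.2 ∧ e.1 ≠ e.2) ∧
  AcyclicRel (G.AugE P) ∧ (∃ l : List V, IsHamPathOf (G.AugE P) l)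

/-- The number of crossings the (chord-drawn) edges of the completion set `P` make with the
edges of `G` in the embedding. -/
noncomputable def crossNum (G : OuterStDigraph V) (P : Finset (V × V)) : ℕ :=
  Set.ncard {q : (V × V) × (V × V) | q.1 ∈ P ∧ G.E q.2.1 q.2.2 ∧ G.Cross q.1 q.2}

/-- `P` is a crossing-optimal acyclic HP-completion set for `G`. -/
def IsOptimalCompletion (G : OuterStDigraph V) (P : Finset (V × V)) : Prop :=
  G.IsCompletion P ∧ ∀ Q : Finset (V × V), G.IsCompletion Q → G.crossNum P ≤ G.crossNum Q

/-- `G` is an st-polygon: it has at least 4 vertices and no edge joins a vertex strictly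
inside the left side to a vertex strictly inside the right side (in either direction);
the only possible two-sided edge is the median `(s,t)`. -/
def IsStPolygon (G : OuterStDigraph V) : Prop :=
  4 ≤ Fintype.card V ∧
  ∀ u v, G.E u v → ¬ (u ∈ G.leftV ∧ v ∈ G.rightV) ∧ ¬ (u ∈ G.rightV ∧ v ∈ G.leftV)

end OuterStDigraph

open OuterStDigraph

theorem List.IsChain.pairwise_transGen {α : Type*} {r : α → α → Prop} {l : List α}
    (h : l.IsChain r) : l.Pairwise (Relation.TransGen r) :=
  List.isChain_iff_pairwise.mp (h.imp fun _ _ => Relation.TransGen.single)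

theorem List.sublist_of_subset_of_pairwise {α : Type*} {r : α → α → Prop}
    (hr : ∀ a b, r a b → ¬ r b a) {l₁ l₂ : List α} (h : l₁ ⊆ l₂)
    (h₁ : l₁.Pairwise r) (h₂ : l₂.Pairwise r) : l₁.Sublist l₂ :=
  haveI : Std.Antisymm r := ⟨fun a b hab hba => (hr a b hab hba).elim⟩
  have hnodup : l₁.Nodup := h₁.imp fun {a _} hab => by rintro rfl; exact hr a a hab hab
  List.sublist_of_subperm_of_pairwise (List.subperm_of_subset hnodup h) h₁ h₂

theorem AcyclicRel.transGen_asymm {V : Type} {E : V → V → Prop} (hE : AcyclicRel E)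
    (a b : V) (hab : Relation.TransGen E a b) : ¬ Relation.TransGen E b a :=
  fun hba => hE a (hab.trans hba)

/-- A hamiltonian path of an acyclic digraph is a linear extension of the reachability order,
so it traverses every directed path in order. -/
theorem IsHamPathOf.sublist_of_isChain {V : Type} {E : V → V → Prop} (hE : AcyclicRel E)
    {l L : List V} (hl : IsHamPathOf E l) (hL : L.IsChain E) : L.Sublist l :=
  List.sublist_of_subset_of_pairwise hE.transGen_asymm (fun v _ => hl.2.1 v)
    hL.pairwise_transGen hl.2.2.pairwise_transGen

/-- Any acyclic HP-completion set of an outerplanar st-digraph induces a hamiltonian path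
that visits the vertices of the left side in the order they appear along the left side,
and likewise for the right side. -/
theorem stmt_2 {V : Type} [Fintype V] [DecidableEq V] (G : OuterStDigraph V)
    (P : Finset (V × V)) (hP : G.IsCompletion P)
    (l : List V) (hl : IsHamPathOf (G.AugE P) l) :
    G.leftV.Sublist l ∧ G.rightV.Sublist l := by
  have side : ∀ L : List V, ((G.s :: L) ++ [G.t]).IsChain G.E → L.Sublist l := fun L hL =>
    ((List.sublist_cons_self G.s L).trans (List.sublist_append_left _ _)).trans
      (hl.sublist_of_isChain hP.2.1 (hL.imp fun _ _ => Or.inl))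
  exact ⟨side G.leftV G.left_path, side G.rightV G.right_path⟩
end

section
/- Every st-polygon admits a crossing-optimal acyclic HP-completion set of size at most 2. -/
/-!
Number the left side `s = l₀, l₁, …, l_k, l_{k+1} = t` and the right side
`s = r₀, r₁, …, r_m, r_{m+1} = t`. Since no edge joins the interiors of the two sides, an edge of
`G` crosses a chord `l_a r_b` exactly when it passes over `l_a` along the left side or over `r_b`
along the right side, and only the median `(s, t)` does both. Hence the chord costs
`w(l_a) + w(r_b) - μ`, where `w(v)` counts the edges passing over `v` and `μ ≤ w(v)` counts the
median.

A hamiltonian path of an acyclic completion `Q` visits each side in order; say it starts `s, l₁`.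
The vertex before `r₁` is some `l_a`, so `l_a r₁ ∈ Q`. If `l_k` is followed by some `r_d`, the two
edges `l_a r₁, l_k r_d` of `Q` cost at least the single chord `l_k r₁`. Otherwise `r_m` is followed
by some `l_c` and `l_{a+1}` is preceded by some `r_b`; exchanging the ends of `r_b l_{a+1}` and
`r_m l_c` shows that `{l_a r₁, r_m l_{a+1}}` costs at most as much as `Q`. Both sets complete `G`
along the path `s, l₁, …, l_a, r₁, …, r_m, l_{a+1}, …, l_k, t`, so a cheapest completion with at
most two edges is optimal.
-/

open Relation

theorem AcyclicRel.of_rank {V : Type} {R : V → V → Prop} (f : V → ℕ)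
    (hf : ∀ u v, R u v → f u < f v) : AcyclicRel R := fun v hv => by
  have : TransGen (· < ·) (f v) (f v) := TransGen.lift f hf _ _ hv
  rw [transGen_eq_self] at this
  exact lt_irrefl _ this

theorem AcyclicRel.ne {V : Type} {R : V → V → Prop} (hR : AcyclicRel R) {u v : V}
    (h : R u v) : u ≠ v := by
  rintro rfl
  exact hR u (.single h)

theorem List.IsChain.pairwise_transGen_s6 {α : Type*} {R : α → α → Prop} {c : List α}
    (hc : c.IsChain R) : c.Pairwise (TransGen R) :=
  List.isChain_iff_pairwise.1 (hc.imp fun _ _ => TransGen.single)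

theorem List.IsChain.exists_lt_of_rel {V : Type} {R : V → V → Prop} {c : List V}
    (hc : c.IsChain R) (hR : AcyclicRel R) (d : V) {u v : V} (hu : u ∈ c) (hv : v ∈ c)
    (h : R u v) : ∃ i j, i < j ∧ j < c.length ∧ u = c.getD i d ∧ v = c.getD j d := by
  obtain ⟨i, hi, rfl⟩ := List.mem_iff_getElem.1 hu
  obtain ⟨j, hj, rfl⟩ := List.mem_iff_getElem.1 hv
  refine ⟨i, j, ?_, hj, (c.getD_eq_getElem d hi).symm, (c.getD_eq_getElem d hj).symm⟩
  by_contra! hji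
  rcases hji.eq_or_lt with rfl | hlt
  · exact hR _ (.single h)
  · exact hR _ ((List.pairwise_iff_getElem.1 hc.pairwise_transGen_s6 _ _ _ _ hlt).tail h)

theorem List.Nodup.pairwise_idxOf_lt {α : Type*} [DecidableEq α] {l : List α} (hl : l.Nodup) :
    l.Pairwise (fun u v => l.idxOf u < l.idxOf v) :=
  List.pairwise_iff_getElem.2 fun i j hi hj hij => by
    rwa [hl.idxOf_getElem, hl.idxOf_getElem]

theorem List.Nodup.idxOf_getD_lt_of_sublist {α : Type*} [DecidableEq α] {l c : List α}
    (hl : l.Nodup) (hc : c.Sublist l) (d : α) {i j : ℕ} (hij : i < j) (hj : j < c.length) :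
    l.idxOf (c.getD i d) < l.idxOf (c.getD j d) := by
  rw [c.getD_eq_getElem d (hij.trans hj), c.getD_eq_getElem d hj]
  exact List.pairwise_iff_getElem.1 (hl.pairwise_idxOf_lt.sublist hc) _ _ _ _ hij

/-- Exchange argument: `g` takes its first weight from `f` and its second from `e`. -/
theorem le_sum_of_exchange {ι : Type*} [DecidableEq ι] {Q : Finset ι} {c : ι → ℕ} {e f g : ι}
    {M w₁ w₂ w₃ w₄ : ℕ} (he : e ∈ Q) (hf : f ∈ Q) (hg : e = f → g = e)
    (hce : c e + M = w₁ + w₂) (hcf : c f + M = w₃ + w₄) (hcg : c g + M = w₃ + w₂)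
    (h₁ : M ≤ w₁) : c g ≤ ∑ i ∈ Q, c i := by
  by_cases hef : e = f
  · rw [hg hef]
    exact Finset.single_le_sum (fun _ _ => Nat.zero_le _) he
  · have := Finset.sum_le_sum_of_subset (f := c)
      (Finset.insert_subset he (Finset.singleton_subset_iff.2 hf))
    rw [Finset.sum_pair hef] at this
    omega

namespace IsHamPathOf

variable {V : Type} [DecidableEq V] {R : V → V → Prop} {l : List V}

theorem idxOf_lt_length (hl : IsHamPathOf R l) (v : V) : l.idxOf v < l.length :=
  List.idxOf_lt_length_iff.2 (hl.2.1 v)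

theorem idxOf_inj (hl : IsHamPathOf R l) {u v : V} : l.idxOf u = l.idxOf v ↔ u = v :=
  List.idxOf_inj (hl.2.1 u)

theorem exists_rel_idxOf_succ (hl : IsHamPathOf R l) {i : ℕ} (hi : i + 1 < l.length) :
    ∃ u v, R u v ∧ l.idxOf u = i ∧ l.idxOf v = i + 1 :=
  ⟨l[i], l[i + 1], List.isChain_iff_getElem.1 hl.2.2 i hi, hl.1.idxOf_getElem _ _,
    hl.1.idxOf_getElem _ _⟩

theorem exists_pred (hl : IsHamPathOf R l) {v : V} (hv : 0 < l.idxOf v) :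
    ∃ u, R u v ∧ l.idxOf v = l.idxOf u + 1 := by
  obtain ⟨u, w, huw, hu, hw⟩ :=
    hl.exists_rel_idxOf_succ (i := l.idxOf v - 1) (by have := hl.idxOf_lt_length v; omega)
  obtain rfl : w = v := hl.idxOf_inj.1 (by omega)
  exact ⟨u, huw, by omega⟩

theorem exists_succ (hl : IsHamPathOf R l) {u : V} (hu : l.idxOf u + 1 < l.length) :
    ∃ v, R u v ∧ l.idxOf v = l.idxOf u + 1 := by
  obtain ⟨u', v, huv, hu', hv⟩ := hl.exists_rel_idxOf_succ hu
  obtain rfl : u' = u := hl.idxOf_inj.1 hu'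
  exact ⟨v, huv, hv⟩

theorem idxOf_lt_of_transGen (hl : IsHamPathOf R l) (hR : AcyclicRel R) {u v : V}
    (h : TransGen R u v) : l.idxOf u < l.idxOf v := by
  by_contra! hvu
  rcases hvu.eq_or_lt with heq | hlt
  · exact hR u (hl.idxOf_inj.1 heq ▸ h)
  · have hback := List.pairwise_iff_getElem.1 hl.2.2.pairwise_transGen_s6 _ _
      (hl.idxOf_lt_length v) (hl.idxOf_lt_length u) hlt
    simp only [List.getElem_idxOf] at hback
    exact hR u (h.trans hback)

theorem idxOf_getD_lt (hl : IsHamPathOf R l) (hR : AcyclicRel R) {c : List V} (hc : c.IsChain R)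
    (d : V) {i j : ℕ} (hij : i < j) (hj : j < c.length) :
    l.idxOf (c.getD i d) < l.idxOf (c.getD j d) := by
  rw [c.getD_eq_getElem d (hij.trans hj), c.getD_eq_getElem d hj]
  exact hl.idxOf_lt_of_transGen hR (List.pairwise_iff_getElem.1 hc.pairwise_transGen_s6 _ _ _ _ hij)

theorem eq_add_one_of_idxOf_getD (hl : IsHamPathOf R l) (hR : AcyclicRel R) {c : List V}
    (hc : c.IsChain R) (d : V) {i j : ℕ} (hi : i < c.length) (hj : j < c.length)
    (h : l.idxOf (c.getD j d) = l.idxOf (c.getD i d) + 1) : j = i + 1 := by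
  have mono := fun {i j} => hl.idxOf_getD_lt hR hc d (i := i) (j := j)
  rcases lt_trichotomy j (i + 1) with hlt | heq | hgt
  · rcases (Nat.lt_succ_iff.1 hlt).lt_or_eq with hji | rfl
    · have := mono hji hi
      omega
    · omega
  · exact heq
  · have := mono (show i < i + 1 by omega) (by omega)
    have := mono hgt hj
    omega

theorem idxOf_eq_zero (hl : IsHamPathOf R l) (hR : AcyclicRel R) {s : V}
    (hs : ∀ v, v ≠ s → TransGen R s v) : l.idxOf s = 0 := by
  by_contra h
  obtain ⟨u, hus, -⟩ := hl.exists_pred (Nat.pos_of_ne_zero h)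
  exact hR s ((hs u (hR.ne hus)).tail hus)

theorem idxOf_add_one_eq_length (hl : IsHamPathOf R l) (hR : AcyclicRel R) {t : V}
    (ht : ∀ v, v ≠ t → TransGen R v t) : l.idxOf t + 1 = l.length := by
  by_contra h
  obtain ⟨v, htv, -⟩ := hl.exists_succ (u := t) (by have := hl.idxOf_lt_length t; omega)
  exact hR t (.head htv (ht v (hR.ne htv).symm))

end IsHamPathOf

/-- An st-polygon without its embedding: two directed paths `s, X, t` and `s, Y, t` that cover the
vertices and share only their ends, in an acyclic digraph with no edge between `X` and `Y`. -/
structure StPolygon (V : Type) where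
  E : V → V → Prop
  s : V
  t : V
  X : List V
  Y : List V
  nodup : (s :: X ++ t :: Y).Nodup
  mem : ∀ v, v ∈ s :: X ++ t :: Y
  isChain_X : (s :: X ++ [t]).IsChain E
  isChain_Y : (s :: Y ++ [t]).IsChain E
  acyclic : AcyclicRel E
  not_rel : ∀ u ∈ X, ∀ v ∈ Y, ¬ E u v ∧ ¬ E v u

namespace StPolygon

variable {V : Type} (P : StPolygon V)

theorem perm_swap : (P.s :: P.X ++ P.t :: P.Y).Perm (P.s :: P.Y ++ P.t :: P.X) :=
  .cons _ (List.perm_append_comm.trans List.perm_middle.symm)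

@[simps]
def swap : StPolygon V where
  E := P.E
  s := P.s
  t := P.t
  X := P.Y
  Y := P.X
  nodup := P.perm_swap.nodup_iff.1 P.nodup
  mem v := P.perm_swap.mem_iff.1 (P.mem v)
  isChain_X := P.isChain_Y
  isChain_Y := P.isChain_X
  acyclic := P.acyclic
  not_rel u hu v hv := (P.not_rel v hv u hu).symm

/-- The `i`-th vertex of the side `s, X, t`: `x 0 = s`, `x 1, …, x |X|` run through `X`,
and `x (|X| + 1) = t`. -/
def x (i : ℕ) : V := (P.s :: P.X ++ [P.t]).getD i P.s

abbrev y (j : ℕ) : V := P.swap.x j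

theorem x_zero : P.x 0 = P.s := rfl

theorem x_length_add_one : P.x (P.X.length + 1) = P.t := by
  simp [x, List.getD_eq_getElem?_getD]

theorem y_length_add_one : P.y (P.Y.length + 1) = P.t := P.swap.x_length_add_one

theorem x_mem {i : ℕ} (h1 : 1 ≤ i) (h2 : i ≤ P.X.length) : P.x i ∈ P.X := by
  obtain ⟨i, rfl⟩ := Nat.exists_eq_add_of_le' h1
  simp only [x, List.cons_append, List.getD_cons_succ]
  rw [List.getD_append _ _ _ _ (by omega), List.getD_eq_getElem _ _ (by omega)]
  exact List.getElem_mem _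

theorem y_mem {j : ℕ} (h1 : 1 ≤ j) (h2 : j ≤ P.Y.length) : P.y j ∈ P.Y := P.swap.x_mem h1 h2

theorem exists_eq_x_of_mem_path {v : V} (hv : v ∈ P.s :: P.X ++ [P.t]) :
    ∃ i, i ≤ P.X.length + 1 ∧ v = P.x i := by
  obtain ⟨i, hi, rfl⟩ := List.mem_iff_getElem.1 hv
  exact ⟨i, by simp at hi; omega, (List.getD_eq_getElem _ _ hi).symm⟩

theorem exists_eq_x {u : V} (hu : u ∈ P.X) : ∃ i, 1 ≤ i ∧ i ≤ P.X.length ∧ u = P.x i := by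
  obtain ⟨i, hi, rfl⟩ := List.mem_iff_getElem.1 hu
  refine ⟨i + 1, by omega, hi, ?_⟩
  simp only [x, List.cons_append, List.getD_cons_succ]
  rw [List.getD_append _ _ _ _ hi, List.getD_eq_getElem _ _ hi]

theorem ne_of_mem_X_of_mem_Y {u v : V} (hu : u ∈ P.X) (hv : v ∈ P.Y) : u ≠ v :=
  (List.nodup_append.1 P.nodup).2.2 u (.tail _ hu) v (.tail _ hv)

theorem mem_path_or_mem_Y (v : V) : v ∈ P.s :: P.X ++ [P.t] ∨ v ∈ P.Y := by
  have := P.mem v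
  simp only [List.cons_append, List.mem_cons, List.mem_append] at this ⊢
  tauto

theorem pairwise_path : (P.s :: P.X ++ [P.t]).Pairwise (TransGen P.E) :=
  P.isChain_X.pairwise_transGen_s6

theorem transGen_s {v : V} (hv : v ≠ P.s) : TransGen P.E P.s v := by
  have hX := List.pairwise_cons.1 P.pairwise_path
  have hY := List.pairwise_cons.1 P.swap.pairwise_path
  rcases P.mem_path_or_mem_Y v with h | h
  · exact hX.1 v (by simpa [hv] using h)
  · exact hY.1 v (by simp [h])

theorem transGen_t {v : V} (hv : v ≠ P.t) : TransGen P.E v P.t := by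
  have hX := List.pairwise_append.1 P.pairwise_path
  have hY := List.pairwise_append.1 P.swap.pairwise_path
  rcases P.mem_path_or_mem_Y v with h | h
  · exact hX.2.2 v (by simpa [hv] using h) _ (List.mem_singleton_self _)
  · exact hY.2.2 v (by simp [h]) _ (List.mem_singleton_self _)

theorem exists_eq_x_of_rel {u v : V} (hu : u ∈ P.s :: P.X ++ [P.t])
    (hv : v ∈ P.s :: P.X ++ [P.t]) (h : P.E u v) :
    ∃ i j, i < j ∧ j ≤ P.X.length + 1 ∧ u = P.x i ∧ v = P.x j := by
  obtain ⟨i, j, hij, hj, rfl, rfl⟩ := P.isChain_X.exists_lt_of_rel P.acyclic P.s hu hv h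
  exact ⟨i, j, hij, by simpa using hj, rfl, rfl⟩

theorem rel_cases {u v : V} (h : P.E u v) :
    (∃ i j, i < j ∧ j ≤ P.X.length + 1 ∧ u = P.x i ∧ v = P.x j) ∨
      (∃ i j, i < j ∧ j ≤ P.Y.length + 1 ∧ u = P.y i ∧ v = P.y j) := by
  rcases P.mem_path_or_mem_Y u with hu | hu <;> rcases P.mem_path_or_mem_Y v with hv | hv
  · exact .inl (P.exists_eq_x_of_rel hu hv h)
  · by_cases huX : u ∈ P.X
    · exact absurd h (P.not_rel u huX v hv).1
    · exact .inr (P.swap.exists_eq_x_of_rel (by simp at hu ⊢; tauto) (by simp [hv]) h)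
  · by_cases hvX : v ∈ P.X
    · exact absurd h (P.not_rel v hvX u hu).2
    · exact .inr (P.swap.exists_eq_x_of_rel (by simp [hu]) (by simp at hv ⊢; tauto) h)
  · exact .inr (P.swap.exists_eq_x_of_rel (by simp [hu]) (by simp [hv]) h)

theorem rel_x_succ {i : ℕ} (hi : i ≤ P.X.length) : P.E (P.x i) (P.x (i + 1)) := by
  have := List.isChain_iff_getElem.1 P.isChain_X i (by simp; omega)
  rwa [← List.getD_eq_getElem _ P.s, ← List.getD_eq_getElem _ P.s] at this

theorem getElem?_path {i : ℕ} (hi : i ≤ P.X.length + 1) :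
    (P.s :: P.X ++ [P.t])[i]? = some (P.x i) := by
  rw [List.getElem?_eq_getElem (by simp; omega), x, List.getD_eq_getElem]

theorem head?_X (hX : P.X ≠ []) : P.X.head? = some (P.x 1) := by
  obtain ⟨n, hn⟩ : ∃ n, P.X.length = n + 1 := Nat.exists_eq_succ_of_ne_zero (by simpa using hX)
  simp [x, List.head?_eq_getElem?, List.getD_eq_getElem?_getD, hn]

theorem getLast?_X (hX : P.X ≠ []) : P.X.getLast? = some (P.x P.X.length) := by
  obtain ⟨n, hn⟩ : ∃ n, P.X.length = n + 1 := Nat.exists_eq_succ_of_ne_zero (by simpa using hX)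
  simp [x, List.getLast?_eq_getElem?, List.getD_eq_getElem?_getD, hn]

theorem head?_Y (hY : P.Y ≠ []) : P.Y.head? = some (P.y 1) := P.swap.head?_X hY

theorem getLast?_Y (hY : P.Y ≠ []) : P.Y.getLast? = some (P.y P.Y.length) :=
  P.swap.getLast?_X hY

theorem getLast?_take_path {a : ℕ} (ha : a ≤ P.X.length + 1) :
    ((P.s :: P.X ++ [P.t]).take (a + 1)).getLast? = some (P.x a) := by
  rw [List.getLast?_take, if_neg (by omega), Nat.add_sub_cancel, P.getElem?_path ha,
    Option.some_or]

theorem head?_drop_path {a : ℕ} (ha : a ≤ P.X.length) :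
    ((P.s :: P.X ++ [P.t]).drop (a + 1)).head? = some (P.x (a + 1)) := by
  rw [List.head?_drop, P.getElem?_path (by omega)]

def AugE (Q : Finset (V × V)) : V → V → Prop := fun u v => P.E u v ∨ (u, v) ∈ Q

def IsCompletion (Q : Finset (V × V)) : Prop :=
  (∀ e ∈ Q, ¬ P.E e.1 e.2 ∧ e.1 ≠ e.2) ∧ AcyclicRel (P.AugE Q) ∧
    ∃ l : List V, IsHamPathOf (P.AugE Q) l

theorem isChain_X_aug (Q : Finset (V × V)) : (P.s :: P.X ++ [P.t]).IsChain (P.AugE Q) :=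
  P.isChain_X.imp fun _ _ => Or.inl

theorem isChain_Y_aug (Q : Finset (V × V)) : P.Y.IsChain (P.AugE Q) :=
  P.isChain_Y.tail.left_of_append.imp fun _ _ => Or.inl

theorem not_rel_and_ne {u v : V} (hu : u ∈ P.X) (hv : v ∈ P.Y) :
    (¬ P.E u v ∧ u ≠ v) ∧ (¬ P.E v u ∧ v ≠ u) :=
  ⟨⟨(P.not_rel u hu v hv).1, P.ne_of_mem_X_of_mem_Y hu hv⟩,
    ⟨(P.not_rel u hu v hv).2, (P.ne_of_mem_X_of_mem_Y hu hv).symm⟩⟩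

theorem isCompletion_empty_of_X_eq_nil (hX : P.X = []) : P.IsCompletion ∅ := by
  have hperm : (P.s :: P.Y ++ [P.t]).Perm (P.s :: P.X ++ P.t :: P.Y) := by
    simp [hX]
  have hE : P.AugE ∅ = P.E := by ext u v; simp [AugE]
  refine ⟨by simp, hE ▸ P.acyclic, P.s :: P.Y ++ [P.t], hperm.nodup_iff.2 P.nodup,
    fun v => hperm.mem_iff.2 (P.mem v), hE ▸ P.isChain_Y⟩

section Candidates

def candidatePath (a : ℕ) : List V :=
  (P.s :: P.X ++ [P.t]).take (a + 1) ++ P.Y ++ (P.s :: P.X ++ [P.t]).drop (a + 1)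

theorem candidatePath_perm (a : ℕ) : (P.candidatePath a).Perm (P.s :: P.X ++ P.t :: P.Y) := by
  rw [candidatePath, List.append_assoc]
  refine (List.perm_append_comm.append_left _).trans ?_
  rw [← List.append_assoc, List.take_append_drop]
  simp

theorem sublist_candidatePath_X (a : ℕ) : (P.s :: P.X ++ [P.t]).Sublist (P.candidatePath a) := by
  conv_lhs => rw [← List.take_append_drop (a + 1) (P.s :: P.X ++ [P.t])]
  exact ((List.sublist_append_right P.Y _).append_left _).trans (by simp [candidatePath])

theorem sublist_candidatePath_Y {a : ℕ} (ha : a ≤ P.X.length) :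
    (P.s :: P.Y ++ [P.t]).Sublist (P.candidatePath a) := by
  have hs : [P.s].Sublist ((P.s :: P.X ++ [P.t]).take (a + 1)) := by simp
  have ht : [P.t].Sublist ((P.s :: P.X ++ [P.t]).drop (a + 1)) := by
    simp [List.drop_append_of_le_length, ha]
  simpa [candidatePath] using (hs.append (List.Sublist.refl P.Y)).append ht

variable [DecidableEq V]

def candidate (a : ℕ) : Finset (V × V) :=
  if a < P.X.length then {(P.x a, P.y 1), (P.y P.Y.length, P.x (a + 1))}
  else {(P.x a, P.y 1)}

variable {a : ℕ}

theorem mem_candidate {e : V × V} :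
    e ∈ P.candidate a ↔
      e = (P.x a, P.y 1) ∨ (a < P.X.length ∧ e = (P.y P.Y.length, P.x (a + 1))) := by
  unfold candidate
  split_ifs with h <;> simp [h]

theorem card_candidate_le_two : (P.candidate a).card ≤ 2 := by
  unfold candidate
  split_ifs
  · exact Finset.card_le_two
  · simp

theorem isChain_candidatePath (hY : P.Y ≠ []) (ha : a ≤ P.X.length) :
    (P.candidatePath a).IsChain (P.AugE (P.candidate a)) := by
  have hX := P.isChain_X_aug (P.candidate a)
  refine ((hX.take _).append (P.isChain_Y_aug _) ?_).append (hX.drop _) ?_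
  · rw [P.getLast?_take_path (by omega), P.head?_Y hY]
    simp only [Option.mem_some_iff]
    rintro _ rfl _ rfl
    exact .inr (P.mem_candidate.2 (.inl rfl))
  · rw [List.getLast?_append_of_ne_nil _ hY, P.getLast?_Y hY, P.head?_drop_path ha]
    simp only [Option.mem_some_iff]
    rintro _ rfl _ rfl
    rcases ha.lt_or_eq with ha | rfl
    · exact .inr (P.mem_candidate.2 (.inr ⟨ha, rfl⟩))
    · rw [x_length_add_one]
      exact .inl (P.swap.x_length_add_one ▸ P.swap.rel_x_succ le_rfl)

theorem acyclic_candidate (hY : P.Y ≠ []) (ha : a ≤ P.X.length) :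
    AcyclicRel (P.AugE (P.candidate a)) := by
  have hnd := (P.candidatePath_perm a).nodup_iff.2 P.nodup
  have hpw := List.pairwise_append.1 hnd.pairwise_idxOf_lt
  have hpw' := List.pairwise_append.1 hpw.1
  refine AcyclicRel.of_rank (P.candidatePath a).idxOf fun u v huv => ?_
  rcases huv with h | h
  · rcases P.rel_cases h with ⟨i, j, hij, hj, rfl, rfl⟩ | ⟨i, j, hij, hj, rfl, rfl⟩
    · exact hnd.idxOf_getD_lt_of_sublist (P.sublist_candidatePath_X a) P.s hij (by simp; omega)
    · exact hnd.idxOf_getD_lt_of_sublist (P.sublist_candidatePath_Y ha) P.s hij (by simp; omega)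
  · have hY1 : 1 ≤ P.Y.length := List.length_pos_iff.2 hY
    rcases P.mem_candidate.1 h with h | ⟨ha', h⟩ <;> obtain ⟨rfl, rfl⟩ := Prod.ext_iff.1 h
    · refine hpw'.2.2 _ (List.mem_of_mem_getLast? ?_) _ (P.y_mem le_rfl hY1)
      rw [P.getLast?_take_path (by omega)]
      rfl
    · refine hpw.2.2 _ (List.mem_append_right _ (P.y_mem hY1 le_rfl)) _
        (List.mem_of_mem_head? ?_)
      rw [P.head?_drop_path ha]
      rfl

theorem isCompletion_candidate (hY : P.Y ≠ []) (ha1 : 1 ≤ a) (ha : a ≤ P.X.length) :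
    P.IsCompletion (P.candidate a) := by
  have hY1 : 1 ≤ P.Y.length := List.length_pos_iff.2 hY
  refine ⟨fun e he => ?_, P.acyclic_candidate hY ha, P.candidatePath a,
    (P.candidatePath_perm a).nodup_iff.2 P.nodup, fun v => (P.candidatePath_perm a).mem_iff.2
    (P.mem v), P.isChain_candidatePath hY ha⟩
  rcases P.mem_candidate.1 he with rfl | ⟨ha', rfl⟩
  · exact (P.not_rel_and_ne (P.x_mem ha1 ha) (P.y_mem le_rfl hY1)).1
  · exact (P.not_rel_and_ne (P.x_mem (by omega) ha') (P.y_mem hY1 le_rfl)).2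

end Candidates

theorem exists_isCompletion_card_le_two [DecidableEq V] :
    ∃ R, P.IsCompletion R ∧ R.card ≤ 2 := by
  rcases eq_or_ne P.X [] with hX | hX
  · exact ⟨∅, P.isCompletion_empty_of_X_eq_nil hX, by simp⟩
  rcases eq_or_ne P.Y [] with hY | hY
  · exact ⟨∅, P.swap.isCompletion_empty_of_X_eq_nil hY, by simp⟩
  exact ⟨_, P.isCompletion_candidate hY (List.length_pos_iff.2 hX) le_rfl,
    P.card_candidate_le_two⟩

section HamiltonianPath

variable {Q : Finset (V × V)} {h : List V}

theorem mem_of_augE {u v : V} (hu : u ∈ P.X) (hv : v ∈ P.Y) (huv : P.AugE Q u v) : (u, v) ∈ Q :=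
  huv.resolve_left (P.not_rel u hu v hv).1

theorem mem_of_augE' {u v : V} (hu : u ∈ P.X) (hv : v ∈ P.Y) (hvu : P.AugE Q v u) :
    (v, u) ∈ Q :=
  hvu.resolve_left (P.not_rel u hu v hv).2

variable [DecidableEq V] (hR : AcyclicRel (P.AugE Q)) (hh : IsHamPathOf (P.AugE Q) h)
include hR hh

theorem idxOf_s : h.idxOf P.s = 0 :=
  hh.idxOf_eq_zero hR fun _ hv => TransGen.mono (fun _ _ => Or.inl) _ _ (P.transGen_s hv)

theorem idxOf_t_add_one : h.idxOf P.t + 1 = h.length :=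
  hh.idxOf_add_one_eq_length hR fun _ hv => TransGen.mono (fun _ _ => Or.inl) _ _ (P.transGen_t hv)

theorem idxOf_x_lt {i j : ℕ} (hij : i < j) (hj : j ≤ P.X.length + 1) :
    h.idxOf (P.x i) < h.idxOf (P.x j) :=
  hh.idxOf_getD_lt hR (P.isChain_X_aug Q) P.s hij (by simp; omega)

theorem eq_x_succ {i : ℕ} (hi : i ≤ P.X.length) {w : V} (hwp : w ∈ P.s :: P.X ++ [P.t])
    (hw : h.idxOf w = h.idxOf (P.x i) + 1) : w = P.x (i + 1) := by
  obtain ⟨j, hj, rfl⟩ := P.exists_eq_x_of_mem_path hwp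
  rw [hh.eq_add_one_of_idxOf_getD hR (P.isChain_X_aug Q) P.s (by simp; omega) (by simp; omega) hw]

theorem eq_x_pred {i : ℕ} (hi : i ≤ P.X.length) {w : V} (hwp : w ∈ P.s :: P.X ++ [P.t])
    (hw : h.idxOf (P.x (i + 1)) = h.idxOf w + 1) : w = P.x i := by
  obtain ⟨j, hj, rfl⟩ := P.exists_eq_x_of_mem_path hwp
  have :=
    hh.eq_add_one_of_idxOf_getD hR (P.isChain_X_aug Q) P.s (by simp; omega) (by simp; omega) hw
  rw [show j = i by omega]

theorem exists_succ_x_length (hX : P.X ≠ []) :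
    ∃ w, h.idxOf w = h.idxOf (P.x P.X.length) + 1 ∧
      (w = P.t ∨ w ∈ P.Y ∧ (P.x P.X.length, w) ∈ Q) := by
  have hlt := P.idxOf_x_lt hR hh (Nat.lt_succ_self P.X.length) le_rfl
  rw [x_length_add_one] at hlt
  obtain ⟨w, hw, hρw⟩ :=
    hh.exists_succ (u := P.x P.X.length) (by have := P.idxOf_t_add_one hR hh; omega)
  refine ⟨w, hρw, ?_⟩
  rcases P.mem_path_or_mem_Y w with hwp | hwY
  · exact .inl (P.x_length_add_one ▸ P.eq_x_succ hR hh le_rfl hwp hρw)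
  · exact .inr ⟨hwY, P.mem_of_augE (P.x_mem (List.length_pos_iff.2 hX) le_rfl) hwY hw⟩

theorem exists_pred_x_succ {a : ℕ} (ha : a < P.X.length)
    (hne : h.idxOf (P.x (a + 1)) ≠ h.idxOf (P.x a) + 1) : ∃ v ∈ P.Y, (v, P.x (a + 1)) ∈ Q := by
  have hpos := P.idxOf_x_lt hR hh (Nat.zero_lt_succ a) (by omega)
  obtain ⟨u, hu, hρu⟩ := hh.exists_pred (Nat.zero_lt_of_lt hpos)
  rcases P.mem_path_or_mem_Y u with hup | huY
  · exact absurd (P.eq_x_pred hR hh ha.le hup hρu ▸ hρu) hne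
  · exact ⟨u, huY, P.mem_of_augE' (P.x_mem (by omega) ha) huY hu⟩

theorem exists_pred_y_one (hX : P.X ≠ []) (hY : P.Y ≠ []) (h1 : h.idxOf (P.x 1) = 1) :
    ∃ a, 1 ≤ a ∧ a ≤ P.X.length ∧ (P.x a, P.y 1) ∈ Q ∧ h.idxOf (P.y 1) = h.idxOf (P.x a) + 1 := by
  have hY1 := List.length_pos_iff.2 hY
  have hpos := P.swap.idxOf_x_lt hR hh Nat.zero_lt_one (by simp only [swap_X]; omega)
  obtain ⟨u, hu, hρu⟩ := hh.exists_pred (Nat.zero_lt_of_lt hpos)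
  rcases P.swap.mem_path_or_mem_Y u with hup | huX
  · have hus := P.swap.eq_x_pred hR hh (i := 0) (Nat.zero_le _) hup hρu
    rw [hus, x_zero, swap_s, P.idxOf_s hR hh] at hρu
    simp only [zero_add] at hρu
    have hyx : P.y 1 = P.x 1 := hh.idxOf_inj.1 (hρu.trans h1.symm)
    exact absurd hyx.symm (P.ne_of_mem_X_of_mem_Y (P.x_mem le_rfl (List.length_pos_iff.2 hX))
      (P.y_mem le_rfl hY1))
  · obtain ⟨a, ha1, ha, rfl⟩ := P.exists_eq_x huX
    exact ⟨a, ha1, ha, P.mem_of_augE huX (P.y_mem le_rfl hY1) hu, hρu⟩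

end HamiltonianPath

/-- The shape of the crossing cost of a chord: `W u + W v - M` for `u ∈ X` and `v ∈ Y`. -/
structure IsChordCost (c : V × V → ℕ) (W : V → ℕ) (M : ℕ) : Prop where
  cost_add : ∀ u ∈ P.X, ∀ v ∈ P.Y, c (u, v) + M = W u + W v ∧ c (v, u) + M = W u + W v
  le_weight : ∀ v, v ∈ P.X ∨ v ∈ P.Y → M ≤ W v

variable {P} {c : V × V → ℕ} {W : V → ℕ} {M : ℕ}

theorem IsChordCost.swap (hc : P.IsChordCost c W M) : P.swap.IsChordCost c W M where
  cost_add u hu v hv := by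
    obtain ⟨h₁, h₂⟩ := hc.cost_add v hv u hu
    exact ⟨by rw [h₂, add_comm], by rw [h₁, add_comm]⟩
  le_weight v hv := hc.le_weight v hv.symm

variable [DecidableEq V] {Q : Finset (V × V)}

theorem IsChordCost.le_sum_of_mem_of_mem (hc : P.IsChordCost c W M) {u₁ u₂ v₁ v₂ : V}
    (hu₁ : u₁ ∈ P.X) (hu₂ : u₂ ∈ P.X) (hv₁ : v₁ ∈ P.Y) (hv₂ : v₂ ∈ P.Y)
    (h₁ : (u₁, v₁) ∈ Q) (h₂ : (u₂, v₂) ∈ Q) : c (u₂, v₁) ≤ ∑ e ∈ Q, c e :=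
  le_sum_of_exchange h₁ h₂ (fun h => by simp_all) (hc.cost_add _ hu₁ _ hv₁).1
    (hc.cost_add _ hu₂ _ hv₂).1 (hc.cost_add _ hu₂ _ hv₁).1 (hc.le_weight _ (.inl hu₁))

theorem IsChordCost.le_sum_of_mem_of_mem' (hc : P.IsChordCost c W M) {u₁ u₂ v₁ v₂ : V}
    (hu₁ : u₁ ∈ P.X) (hu₂ : u₂ ∈ P.X) (hv₁ : v₁ ∈ P.Y) (hv₂ : v₂ ∈ P.Y)
    (h₁ : (v₁, u₁) ∈ Q) (h₂ : (v₂, u₂) ∈ Q) : c (v₂, u₁) ≤ ∑ e ∈ Q, c e :=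
  hc.swap.le_sum_of_mem_of_mem hv₁ hv₂ hu₁ hu₂ h₁ h₂

theorem IsChordCost.exists_candidate_le {h : List V} (hc : P.IsChordCost c W M) (hX : P.X ≠ [])
    (hY : P.Y ≠ []) (hR : AcyclicRel (P.AugE Q)) (hh : IsHamPathOf (P.AugE Q) h)
    (h1 : h.idxOf (P.x 1) = 1) :
    ∃ a, 1 ≤ a ∧ a ≤ P.X.length ∧ ∑ e ∈ P.candidate a, c e ≤ ∑ e ∈ Q, c e := by
  have hX1 := List.length_pos_iff.2 hX
  have hY1 := List.length_pos_iff.2 hY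
  have hxk := P.x_mem hX1 le_rfl
  have hy1 := P.y_mem le_rfl hY1
  have hym := P.y_mem hY1 le_rfl
  obtain ⟨a, ha1, ha, he₁, hρy⟩ := P.exists_pred_y_one hR hh hX hY h1
  have hxa := P.x_mem ha1 ha
  obtain ⟨w, hρw, rfl | ⟨hwY, hwQ⟩⟩ := P.exists_succ_x_length hR hh hX
  · have hρt : h.idxOf (P.y 1) < h.idxOf (P.y (P.Y.length + 1)) :=
      P.swap.idxOf_x_lt hR hh (by omega) le_rfl
    rw [y_length_add_one] at hρt
    have hak : a < P.X.length := ha.lt_of_ne (by rintro rfl; omega)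
    have hxa' := P.x_mem (by omega) hak
    obtain ⟨w', hρw', rfl | ⟨hw'X, hw'Q⟩⟩ : ∃ w', h.idxOf w' = h.idxOf (P.y P.Y.length) + 1 ∧
        (w' = P.t ∨ w' ∈ P.X ∧ (P.y P.Y.length, w') ∈ Q) := P.swap.exists_succ_x_length hR hh hY
    · exact absurd (hh.idxOf_inj.1 (by omega)) (P.ne_of_mem_X_of_mem_Y hxk hym)
    obtain ⟨v, hvY, hvQ⟩ := P.exists_pred_x_succ hR hh hak fun hρ =>
      P.ne_of_mem_X_of_mem_Y hxa' hy1 (hh.idxOf_inj.1 (hρ.trans hρy.symm))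
    have hne : ∀ {u w}, u ∈ P.Y → (u, w) ≠ (P.x a, P.y 1) := fun hu h =>
      P.ne_of_mem_X_of_mem_Y hxa hu (Prod.ext_iff.1 h).1.symm
    refine ⟨a, ha1, ha, ?_⟩
    rw [candidate, if_pos hak, Finset.sum_pair (hne hym).symm, ← Finset.add_sum_erase Q c he₁]
    exact Nat.add_le_add_left (hc.le_sum_of_mem_of_mem' hxa' hw'X hvY hym
      (Finset.mem_erase.2 ⟨hne hvY, hvQ⟩) (Finset.mem_erase.2 ⟨hne hym, hw'Q⟩)) _
  · refine ⟨P.X.length, hX1, le_rfl, ?_⟩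
    rw [candidate, if_neg (lt_irrefl _), Finset.sum_singleton]
    exact hc.le_sum_of_mem_of_mem hxa hxk hy1 hwY he₁ hwQ

theorem IsChordCost.exists_isCompletion_card_le_two_sum_le (hc : P.IsChordCost c W M)
    (hQ : P.IsCompletion Q) :
    ∃ R, P.IsCompletion R ∧ R.card ≤ 2 ∧ ∑ e ∈ R, c e ≤ ∑ e ∈ Q, c e := by
  rcases eq_or_ne P.X [] with hX | hX
  · exact ⟨∅, P.isCompletion_empty_of_X_eq_nil hX, by simp, by simp⟩
  rcases eq_or_ne P.Y [] with hY | hY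
  · exact ⟨∅, P.swap.isCompletion_empty_of_X_eq_nil hY, by simp, by simp⟩
  obtain ⟨-, hR, h, hh⟩ := hQ
  have hs := P.idxOf_s hR hh
  have hst := P.idxOf_x_lt hR hh (Nat.zero_lt_succ P.X.length) le_rfl
  rw [x_zero, x_length_add_one] at hst
  obtain ⟨w, -, hρw⟩ := hh.exists_succ (u := P.s) (by have := P.idxOf_t_add_one hR hh; omega)
  rcases P.mem_path_or_mem_Y w with hwp | hwY
  · have hw := P.eq_x_succ hR hh (Nat.zero_le _) hwp hρw
    obtain ⟨a, ha1, ha, hle⟩ := hc.exists_candidate_le hX hY hR hh (by rw [← hw, hρw, hs])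
    exact ⟨_, P.isCompletion_candidate hY ha1 ha, P.card_candidate_le_two, hle⟩
  · have hw := P.swap.eq_x_succ hR hh (Nat.zero_le _) (by simp [hwY]) hρw
    obtain ⟨b, hb1, hb, hle⟩ := hc.swap.exists_candidate_le hY hX hR hh (by rw [← hw, hρw, hs])
    exact ⟨_, P.swap.isCompletion_candidate hX hb1 hb, P.swap.card_candidate_le_two, hle⟩

end StPolygon

theorem inCycArc_iff {n a b x : ℕ} (ha : a < n) (hb : b < n) (hx : x < n) :
    inCycArc n a b x ↔ (a < x ∧ (x < b ∨ b < a)) ∨ (x < a ∧ x < b ∧ b < a) := by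
  have hmod : ∀ y, y < n → (y + n - a) % n = if a ≤ y then y - a else y + n - a := by
    intro y hy
    split_ifs
    · rw [show y + n - a = y - a + n by omega, Nat.add_mod_right, Nat.mod_eq_of_lt (by omega)]
    · rw [Nat.mod_eq_of_lt (by omega)]
  rw [inCycArc, hmod x hx, hmod b hb]
  split_ifs <;> omega

namespace OuterStDigraph

variable {V : Type} [Fintype V] [DecidableEq V] (G : OuterStDigraph V)

@[simps]
def toStPolygon (hG : G.IsStPolygon) : StPolygon V where
  E := G.E
  s := G.s
  t := G.t
  X := G.leftV
  Y := G.rightV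
  nodup := G.nodup
  mem := G.cover
  isChain_X := G.left_path
  isChain_Y := G.right_path
  acyclic := G.acyclic
  not_rel u hu v hv := ⟨fun h => (hG.2 u v h).1 ⟨hu, hv⟩, fun h => (hG.2 v u h).2 ⟨hv, hu⟩⟩

def pos (v : V) : ℕ := G.cyc.idxOf v

theorem cyc_eq : G.cyc = (G.s :: G.leftV ++ [G.t]) ++ G.rightV.reverse := by
  simp [cyc]

theorem length_cyc : G.cyc.length = G.leftV.length + G.rightV.length + 2 := by
  simp [cyc]
  omega

theorem nodup_cyc : G.cyc.Nodup :=
  (List.Perm.append_left _ (List.Perm.cons _ (List.reverse_perm _))).nodup_iff.2 G.nodup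

theorem mem_cyc (v : V) : v ∈ G.cyc := by
  simpa [cyc, or_comm, or_left_comm] using G.cover v

theorem pos_lt (v : V) : G.pos v < G.leftV.length + G.rightV.length + 2 :=
  G.length_cyc ▸ List.idxOf_lt_length_iff.2 (G.mem_cyc v)

theorem pos_inj {u v : V} : G.pos u = G.pos v ↔ u = v := List.idxOf_inj (G.mem_cyc u)

theorem pos_getElem {i : ℕ} (hi : i < G.cyc.length) : G.pos G.cyc[i] = i :=
  G.nodup_cyc.idxOf_getElem i hi

theorem cross_iff (e f : V × V) :
    G.Cross e f ↔ G.pos e.1 ≠ G.pos f.1 ∧ G.pos e.1 ≠ G.pos f.2 ∧ G.pos e.2 ≠ G.pos f.1 ∧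
      G.pos e.2 ≠ G.pos f.2 ∧
      Xor (inCycArc (G.leftV.length + G.rightV.length + 2) (G.pos e.1) (G.pos e.2) (G.pos f.1))
        (inCycArc (G.leftV.length + G.rightV.length + 2) (G.pos e.1) (G.pos e.2) (G.pos f.2)) := by
  simp only [Cross, chordsCrossIn, ne_eq, pos_inj, ← length_cyc]
  rfl

/-- The edge `f` passes over the vertex `v`: `v` lies strictly between the ends of `f` on the side
of the outer cycle that contains it. -/
def Straddles (f : V × V) (v : V) : Prop :=
  (G.pos f.1 < G.pos v ∧ G.pos v < G.pos f.2 ∧ G.pos f.2 ≤ G.leftV.length + 1) ∨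
    (G.leftV.length + 1 < G.pos v ∧ (G.pos f.1 = 0 ∨ G.pos v < G.pos f.1) ∧
      (G.pos f.2 = G.leftV.length + 1 ∨
        G.leftV.length + 1 < G.pos f.2 ∧ G.pos f.2 < G.pos v))

noncomputable def crossCount (e : V × V) : ℕ := {f : V × V | G.E f.1 f.2 ∧ G.Cross e f}.ncard

noncomputable def weight (v : V) : ℕ := {f : V × V | G.E f.1 f.2 ∧ G.Straddles f v}.ncard

/-- `1` if the median `(s, t)` is an edge of `G`, `0` otherwise. -/
noncomputable def medianCount : ℕ := {f : V × V | G.E f.1 f.2 ∧ f = (G.s, G.t)}.ncard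

theorem crossNum_eq_sum (Q : Finset (V × V)) : G.crossNum Q = ∑ e ∈ Q, G.crossCount e := by
  classical
  simp only [crossNum, crossCount, Set.ncard_eq_toFinset_card', Set.toFinset_ofPred,
    Finset.card_filter]
  rw [Fintype.sum_prod_type, ← Finset.sum_subset (Finset.subset_univ Q)]
  · exact Finset.sum_congr rfl fun e he => by simp [he]
  · intro e _ he
    simp [he]

variable {G} (hG : G.IsStPolygon)
include hG

theorem pos_x {i : ℕ} (hi : i ≤ G.leftV.length + 1) : G.pos ((G.toStPolygon hG).x i) = i := by
  have hlt : i < (G.s :: G.leftV ++ [G.t]).length := by simp; omega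
  have : (G.toStPolygon hG).x i = G.cyc[i]'(by rw [length_cyc]; omega) := by
    simp only [StPolygon.x, toStPolygon, List.getD_eq_getElem _ _ hlt]
    simp only [cyc_eq, List.getElem_append_left hlt]
  rw [this, pos_getElem]

theorem pos_y {j : ℕ} (hj1 : 1 ≤ j) (hj : j ≤ G.rightV.length) :
    G.pos ((G.toStPolygon hG).y j) = G.leftV.length + G.rightV.length + 2 - j := by
  have : (G.toStPolygon hG).y j = G.cyc[G.leftV.length + G.rightV.length + 2 - j]'(by
      rw [length_cyc]; omega) := by
    obtain ⟨j, rfl⟩ := Nat.exists_eq_add_of_le' hj1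
    simp only [StPolygon.x, StPolygon.swap, toStPolygon, List.cons_append, List.getD_cons_succ,
      List.getD_append _ _ _ _ (show j < G.rightV.length by omega), List.getD_eq_getElem _ _
      (show j < G.rightV.length by omega)]
    rw [List.getElem_of_eq G.cyc_eq, List.getElem_append_right (by simp; omega)]
    rw [List.getElem_reverse]
    congr 1
    simp only [List.length_append, List.length_cons, List.length_nil]
    omega
  rw [this, pos_getElem]

theorem pos_s : G.pos G.s = 0 := pos_x hG (Nat.zero_le _)

theorem pos_t : G.pos G.t = G.leftV.length + 1 := by
  simpa [StPolygon.x, List.getD_eq_getElem?_getD] using pos_x hG (i := G.leftV.length + 1) le_rfl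

theorem pos_of_mem_leftV {v : V} (hv : v ∈ G.leftV) : 1 ≤ G.pos v ∧ G.pos v ≤ G.leftV.length := by
  obtain ⟨i, hi1, hi, rfl⟩ := (G.toStPolygon hG).exists_eq_x hv
  rw [toStPolygon_X] at hi
  rw [pos_x hG (by omega)]
  exact ⟨hi1, hi⟩

theorem pos_of_mem_rightV {v : V} (hv : v ∈ G.rightV) : G.leftV.length + 2 ≤ G.pos v := by
  obtain ⟨j, hj1, hj, rfl⟩ := (G.toStPolygon hG).swap.exists_eq_x hv
  rw [pos_y hG hj1 hj]
  simp only [toStPolygon, StPolygon.swap_X] at hj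
  omega

/-- Along the right side, from `s` to `t`, the positions are `0, n - 1, …, k + 2, k + 1`, where
`k = |leftV|` and `n = k + |rightV| + 2`. -/
theorem pos_cases_of_rel {u v : V} (h : G.E u v) :
    (G.pos u < G.pos v ∧ G.pos v ≤ G.leftV.length + 1) ∨
      ((G.pos u = 0 ∨ G.leftV.length + 1 < G.pos u) ∧
        (G.pos v = G.leftV.length + 1 ∨ G.leftV.length + 1 < G.pos v) ∧
        (G.leftV.length + 1 < G.pos u → G.leftV.length + 1 < G.pos v → G.pos v < G.pos u)) := by
  rcases (G.toStPolygon hG).rel_cases h with ⟨i, j, hij, hj, rfl, rfl⟩ | ⟨i, j, hij, hj, rfl, rfl⟩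
    <;> simp only [toStPolygon_X, toStPolygon_Y] at hj
  · rw [pos_x hG (by omega), pos_x hG hj]
    omega
  · have hpos : ∀ l ≤ G.rightV.length + 1, G.pos ((G.toStPolygon hG).y l) =
        if l = 0 then 0 else if l = G.rightV.length + 1 then G.leftV.length + 1
        else G.leftV.length + G.rightV.length + 2 - l := by
      intro l hl
      split_ifs with h0 h1
      · subst h0
        exact pos_s hG
      · subst h1
        simpa [StPolygon.x, List.getD_eq_getElem?_getD] using pos_t hG
      · exact pos_y hG (by omega) (by omega)
    rw [hpos i (by omega), hpos j hj]
    split_ifs <;> omega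

theorem cross_iff_straddles {e f : V × V} {u w : V} (hu : u ∈ G.leftV) (hw : w ∈ G.rightV)
    (he : e = (u, w) ∨ e = (w, u)) (hf : G.E f.1 f.2) :
    G.Cross e f ↔ G.Straddles f u ∨ G.Straddles f w := by
  have hf' := pos_cases_of_rel hG hf
  have := pos_of_mem_leftV hG hu
  have := pos_of_mem_rightV hG hw
  have := G.pos_lt u
  have := G.pos_lt w
  have h1 := G.pos_lt f.1
  have h2 := G.pos_lt f.2
  rcases he with rfl | rfl <;>
  · rw [cross_iff, inCycArc_iff (G.pos_lt _) (G.pos_lt _) h1,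
      inCycArc_iff (G.pos_lt _) (G.pos_lt _) h2, Straddles, Straddles, Xor]
    dsimp only
    constructor <;> intro <;> omega

theorem straddles_s_t {v : V} (hv : v ∈ G.leftV ∨ v ∈ G.rightV) : G.Straddles (G.s, G.t) v := by
  have := G.pos_lt v
  unfold Straddles
  dsimp only
  rw [pos_s hG, pos_t hG]
  rcases hv with hv | hv
  · have := pos_of_mem_leftV hG hv
    omega
  · have := pos_of_mem_rightV hG hv
    omega

theorem straddles_and_straddles_iff {f : V × V} {u w : V} (hu : u ∈ G.leftV)
    (hw : w ∈ G.rightV) : G.Straddles f u ∧ G.Straddles f w ↔ f = (G.s, G.t) := by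
  have := pos_of_mem_leftV hG hu
  have := pos_of_mem_rightV hG hw
  have := G.pos_lt w
  have hs := pos_s hG
  have ht := pos_t hG
  constructor
  · rintro ⟨h1, h2⟩
    unfold Straddles at h1 h2
    have h₁ : G.pos f.1 = G.pos G.s := by omega
    have h₂ : G.pos f.2 = G.pos G.t := by omega
    exact Prod.ext (G.pos_inj.1 h₁) (G.pos_inj.1 h₂)
  · rintro rfl
    unfold Straddles
    dsimp only
    omega

theorem isCompletion_toStPolygon {Q : Finset (V × V)} :
    (G.toStPolygon hG).IsCompletion Q ↔ G.IsCompletion Q :=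
  Iff.rfl

theorem isChordCost : (G.toStPolygon hG).IsChordCost G.crossCount G.weight G.medianCount where
  cost_add u hu w hw := by
    have key : ∀ e, e = (u, w) ∨ e = (w, u) →
        G.crossCount e + G.medianCount = G.weight u + G.weight w := by
      intro e he
      have hunion : {f : V × V | G.E f.1 f.2 ∧ G.Cross e f} =
          {f | G.E f.1 f.2 ∧ G.Straddles f u} ∪ {f | G.E f.1 f.2 ∧ G.Straddles f w} := by
        ext f
        simp only [Set.mem_ofPred_eq, Set.mem_union, ← and_or_left]
        exact and_congr_right (cross_iff_straddles hG hu hw he)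
      have hinter : {f : V × V | G.E f.1 f.2 ∧ G.Straddles f u} ∩
          {f | G.E f.1 f.2 ∧ G.Straddles f w} = {f | G.E f.1 f.2 ∧ f = (G.s, G.t)} := by
        ext f
        simp only [Set.mem_inter_iff, Set.mem_ofPred_eq]
        rw [and_and_and_comm, and_self]
        exact and_congr_right fun _ => straddles_and_straddles_iff hG hu hw
      rw [crossCount, weight, weight, medianCount, hunion, ← hinter]
      exact Set.ncard_union_add_ncard_inter _ _ (Set.toFinite _) (Set.toFinite _)
    exact ⟨key _ (.inl rfl), key _ (.inr rfl)⟩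
  le_weight v hv := Set.ncard_le_ncard (fun f ⟨hE, hf⟩ => ⟨hE, hf ▸ straddles_s_t hG hv⟩)
    (Set.toFinite _)

theorem exists_isCompletion_card_le_two_crossNum_le {Q : Finset (V × V)} (hQ : G.IsCompletion Q) :
    ∃ P, G.IsCompletion P ∧ P.card ≤ 2 ∧ G.crossNum P ≤ G.crossNum Q := by
  obtain ⟨P, hP, hcard, hle⟩ := (isChordCost hG).exists_isCompletion_card_le_two_sum_le
    ((isCompletion_toStPolygon hG).2 hQ)
  exact ⟨P, (isCompletion_toStPolygon hG).1 hP, hcard, by simpa only [crossNum_eq_sum] using hle⟩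

end OuterStDigraph

open OuterStDigraph

/-- Every st-polygon admits a crossing-optimal acyclic HP-completion set of size at most 2. -/
theorem stmt_6 {V : Type} [Fintype V] [DecidableEq V] (G : OuterStDigraph V)
    (hpoly : G.IsStPolygon) :
    ∃ P : Finset (V × V), G.IsOptimalCompletion P ∧ P.card ≤ 2 := by
  obtain ⟨P₀, hP₀, hcard₀⟩ := (G.toStPolygon hpoly).exists_isCompletion_card_le_two
  obtain ⟨P, ⟨hP, hcard⟩, hmin⟩ := Set.exists_min_image
    {P : Finset (V × V) | G.IsCompletion P ∧ P.card ≤ 2} G.crossNum (Set.toFinite _)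
    ⟨P₀, (isCompletion_toStPolygon hpoly).1 hP₀, hcard₀⟩
  refine ⟨P, ⟨hP, fun Q hQ => ?_⟩, hcard⟩
  obtain ⟨R, hR, hRcard, hRQ⟩ := exists_isCompletion_card_le_two_crossNum_le hpoly hQ
  exact (hmin R ⟨hR, hRcard⟩).trans hRQ
end
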